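/- Special case of the robust fractional quadratic matrix inequality (S-procedure direction): let H ∈ ℝ^{p×p} be symmetric, G ∈ ℝ^{p×n}, and 𝒫 ∈ ℝ^{n×n} symmetric positive semidefinite. If there exists λ ≥ 0 such that the block matrix [[H, 0, G],[0, (1−λ)I_m, 0],[Gᵀ, 0, λ𝒫]] is positive semidefinite, then for every X ∈ ℝ^{n×m} with I_m − Xᵀ𝒫X ⪰ 0, the matrix [[H, G·X],[(G·X)ᵀ, I_m]] is positive semidefinite. -/

import Mathlib

/-!
Let `M = graphMatrix p X`, the matrix of `(x, y) ↦ (x, y, X y)`. Expanding blocks,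
`[[H, G X], [(G X)ᵀ, I]] = Mᵀ Q M + λ · diag(0, I - Xᵀ 𝒫 X)`, where `Q` is the block matrix of
the hypothesis. The first summand is a congruence of `Q ⪰ 0`, the second a nonnegative multiple
of a positive semidefinite matrix, so the sum is positive semidefinite.
-/

open Matrix

namespace Matrix

theorem PosSemidef.fromBlocks_zero_zero_zero {l m R : Type*} [Fintype l] [Fintype m]
    [DecidableEq m] [Ring R] [PartialOrder R] [StarRing R] {D : Matrix m m R}
    (hD : D.PosSemidef) : (fromBlocks (0 : Matrix l l R) 0 0 D).PosSemidef := by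
  convert hD.conjTranspose_mul_mul_same (fromCols (0 : Matrix m l R) (1 : Matrix m m R)) using 1
  rw [conjTranspose_fromCols_eq_fromRows_conjTranspose, fromRows_mul, fromRows_mul_fromCols]
  simp

def graphMatrix (p : Type*) {n m R : Type*} [DecidableEq p] [DecidableEq m] [Zero R] [One R]
    (X : Matrix n m R) : Matrix ((p ⊕ m) ⊕ n) (p ⊕ m) R :=
  fromRows 1 (fromCols 0 X)

theorem fromBlocks_eq_transpose_mul_mul_add_smul {p n m R : Type*} [Fintype p] [Fintype n]
    [Fintype m] [DecidableEq p] [DecidableEq m] [CommRing R] (H : Matrix p p R)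
    (G : Matrix p n R) (P : Matrix n n R) (X : Matrix n m R) (lam : R) :
    fromBlocks H (G * X) (G * X)ᵀ 1 =
      (graphMatrix p X)ᵀ *
          fromBlocks (fromBlocks H 0 0 ((1 - lam) • (1 : Matrix m m R))) (fromRows G 0)
            (fromCols Gᵀ 0) (lam • P) *
          graphMatrix p X +
        lam • fromBlocks 0 0 0 (1 - Xᵀ * P * X) := by
  rw [graphMatrix, transpose_fromRows, transpose_fromCols, fromCols_mul_fromBlocks,
    fromCols_mul_fromRows]
  simp only [Matrix.mul_one, Matrix.zero_mul, fromRows_mul, mul_fromCols, Matrix.add_mul,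
    Matrix.smul_mul, Matrix.mul_zero, Matrix.mul_assoc]
  ext (i | i) (j | j) <;> simp [sub_eq_add_neg, mul_add]
  ring

end Matrix

theorem s_procedure_sufficiency_general (p n m : ℕ)
    (H : Matrix (Fin p) (Fin p) ℝ)
    (G : Matrix (Fin p) (Fin n) ℝ)
    (Pcal : Matrix (Fin n) (Fin n) ℝ)
    (lam : ℝ) (hlam : 0 ≤ lam)
    (hLMI : (Matrix.fromBlocks
              (Matrix.fromBlocks H 0 0 ((1 - lam) • (1 : Matrix (Fin m) (Fin m) ℝ)))
              (Matrix.fromRows G 0)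
              (Matrix.fromCols Gᵀ 0)
              (lam • Pcal)).PosSemidef) :
    ∀ X : Matrix (Fin n) (Fin m) ℝ,
      ((1 : Matrix (Fin m) (Fin m) ℝ) - Xᵀ * Pcal * X).PosSemidef →
      (Matrix.fromBlocks H (G * X) (G * X)ᵀ (1 : Matrix (Fin m) (Fin m) ℝ)).PosSemidef := by
  intro X hX
  rw [fromBlocks_eq_transpose_mul_mul_add_smul H G Pcal X lam]
  refine .add ?_ (hX.fromBlocks_zero_zero_zero.smul hlam)
  simpa only [conjTranspose_eq_transpose_of_trivial] using hLMI.conjTranspose_mul_mul_same _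

theorem s_procedure_sufficiency (p n m : ℕ)
    (H : Matrix (Fin p) (Fin p) ℝ) (hH : H.IsHermitian)
    (G : Matrix (Fin p) (Fin n) ℝ)
    (Pcal : Matrix (Fin n) (Fin n) ℝ) (hPcal : Pcal.PosSemidef)
    (lam : ℝ) (hlam : 0 ≤ lam)
    (hLMI : (Matrix.fromBlocks
              (Matrix.fromBlocks H 0 0 ((1 - lam) • (1 : Matrix (Fin m) (Fin m) ℝ)))
              (Matrix.fromRows G 0)
              (Matrix.fromCols Gᵀ 0)
              (lam • Pcal)).PosSemidef) :
    ∀ X : Matrix (Fin n) (Fin m) ℝ,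
      ((1 : Matrix (Fin m) (Fin m) ℝ) - Xᵀ * Pcal * X).PosSemidef →
      (Matrix.fromBlocks H (G * X) (G * X)ᵀ (1 : Matrix (Fin m) (Fin m) ℝ)).PosSemidef :=
  s_procedure_sufficiency_general p n m H G Pcal lam hlam hLMI
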